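/- Let H be an open affine half-space in ℝ^N, let Ω ⊊ ℝ^N be a nonempty open set satisfying Ω = Ω_{(closure H)^c}, and let f : Ω → ℝ be a nonnegative measurable function. Then the dual polarization f^H (defined on Ω via the zero extension of f) is a rearrangement of f: for every t ∈ ℝ, the Lebesgue measure of {x ∈ Ω : f^H(x) > t} equals the Lebesgue measure of {x ∈ Ω : f(x) > t}. -/
import Mathlib


open MeasureTheory
open scoped RealInnerProductSpace ENNReal

/-- Reflection of `ℝ^N` across the hyperplane `{x : ⟪x, u⟫ = c}` (for a unit vector `u`). -/
noncomputable def reflHyp {N : ℕ} (u : EuclideanSpace ℝ (Fin N)) (c : ℝ)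
    (x : EuclideanSpace ℝ (Fin N)) : EuclideanSpace ℝ (Fin N) :=
  x - (2 * (⟪x, u⟫ - c)) • u

/-- The open affine half-space `{x : ⟪x, u⟫ < c}`. -/
def halfSpace {N : ℕ} (u : EuclideanSpace ℝ (Fin N)) (c : ℝ) :
    Set (EuclideanSpace ℝ (Fin N)) :=
  {x | ⟪x, u⟫ < c}

/-- Polarization of a set `Ω` with respect to the half-space `H = halfSpace u c`:
`Ω_H = ((Ω ∪ σ_H(Ω)) ∩ H) ∪ (Ω ∩ σ_H(Ω))`. -/
noncomputable def polSet {N : ℕ} (u : EuclideanSpace ℝ (Fin N)) (c : ℝ)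
    (Ω : Set (EuclideanSpace ℝ (Fin N))) : Set (EuclideanSpace ℝ (Fin N)) :=
  ((Ω ∪ reflHyp u c '' Ω) ∩ halfSpace u c) ∪ (Ω ∩ reflHyp u c '' Ω)

/-- Polarization of a function `f : ℝ^N → ℝ` with respect to `H = halfSpace u c`:
`f_H(x) = max (f x) (f (σ_H x))` if `x ∈ H`, and `f_H(x) = min (f x) (f (σ_H x))` otherwise. -/
noncomputable def polFun {N : ℕ} (u : EuclideanSpace ℝ (Fin N)) (c : ℝ)
    (f : EuclideanSpace ℝ (Fin N) → ℝ) (x : EuclideanSpace ℝ (Fin N)) : ℝ :=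
  if ⟪x, u⟫ < c then max (f x) (f (reflHyp u c x))
  else min (f x) (f (reflHyp u c x))

/-- Polarization of a set with respect to the complementary open half-space
`(closure H)ᶜ = {x : c < ⟪x, u⟫}` (the reflection is the same). -/
noncomputable def polSetC {N : ℕ} (u : EuclideanSpace ℝ (Fin N)) (c : ℝ)
    (Ω : Set (EuclideanSpace ℝ (Fin N))) : Set (EuclideanSpace ℝ (Fin N)) :=
  ((Ω ∪ reflHyp u c '' Ω) ∩ {x | c < ⟪x, u⟫}) ∪ (Ω ∩ reflHyp u c '' Ω)

section Aux
variable {N : ℕ} (u : EuclideanSpace ℝ (Fin N)) (c : ℝ)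

lemma inner_self_one (hu : ‖u‖ = 1) : ⟪u, u⟫ = (1:ℝ) := by
  rw [real_inner_self_eq_norm_sq, hu]; norm_num

lemma inner_reflHyp (hu : ‖u‖ = 1) (x : EuclideanSpace ℝ (Fin N)) :
    ⟪reflHyp u c x, u⟫ = 2 * c - ⟪x, u⟫ := by
  rw [reflHyp, inner_sub_left, real_inner_smul_left, inner_self_one u hu]; ring

lemma reflHyp_invol (hu : ‖u‖ = 1) (x : EuclideanSpace ℝ (Fin N)) :
    reflHyp u c (reflHyp u c x) = x := by
  have h := inner_reflHyp u c hu x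
  rw [reflHyp, h, show reflHyp u c x = x - (2 * (⟪x, u⟫ - c)) • u from rfl]
  module

/-- The linear part of the reflection, as a linear isometry equivalence. -/
noncomputable def reflLin (hu : ‖u‖ = 1) :
    EuclideanSpace ℝ (Fin N) ≃ₗᵢ[ℝ] EuclideanSpace ℝ (Fin N) where
  toFun := fun x => x - (2 * ⟪x, u⟫) • u
  invFun := fun x => x - (2 * ⟪x, u⟫) • u
  map_add' := fun x y => by
    show x + y - (2 * ⟪x + y, u⟫) • u
      = (x - (2 * ⟪x, u⟫) • u) + (y - (2 * ⟪y, u⟫) • u)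
    rw [inner_add_left]; module
  map_smul' := fun m x => by
    show m • x - (2 * ⟪m • x, u⟫) • u = (RingHom.id ℝ) m • (x - (2 * ⟪x, u⟫) • u)
    rw [real_inner_smul_left]
    show m • x - (2 * (m * ⟪x, u⟫)) • u = m • (x - (2 * ⟪x, u⟫) • u)
    module
  left_inv := fun x => by
    show (x - (2 * ⟪x, u⟫) • u) - (2 * ⟪x - (2 * ⟪x, u⟫) • u, u⟫) • u = x
    rw [inner_sub_left, real_inner_smul_left, inner_self_one u hu]; module
  right_inv := fun x => by
    show (x - (2 * ⟪x, u⟫) • u) - (2 * ⟪x - (2 * ⟪x, u⟫) • u, u⟫) • u = x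
    rw [inner_sub_left, real_inner_smul_left, inner_self_one u hu]; module
  norm_map' := fun x => by
    show ‖x - (2 * ⟪x, u⟫) • u‖ = ‖x‖
    have h : ‖x - (2 * ⟪x, u⟫) • u‖ ^ 2 = ‖x‖ ^ 2 := by
      rw [← real_inner_self_eq_norm_sq, ← real_inner_self_eq_norm_sq]
      rw [inner_sub_left, inner_sub_right, inner_sub_right, real_inner_smul_left,
        real_inner_smul_left, real_inner_smul_right, real_inner_smul_right,
        inner_self_one u hu, real_inner_comm u x]
      ring
    have h2 := congrArg Real.sqrt h
    rwa [Real.sqrt_sq (norm_nonneg _), Real.sqrt_sq (norm_nonneg _)] at h2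

lemma reflHyp_eq (hu : ‖u‖ = 1) (x : EuclideanSpace ℝ (Fin N)) :
    reflHyp u c x = reflLin u hu x + (2 * c) • u := by
  show reflHyp u c x = (x - (2 * ⟪x, u⟫) • u) + (2 * c) • u
  rw [reflHyp]; module

lemma reflHyp_measurePreserving (hu : ‖u‖ = 1) :
    MeasurePreserving (reflHyp u c) volume volume := by
  have h : reflHyp u c = (fun y => y + (2 * c) • u) ∘ (reflLin u hu) := by
    funext x; exact reflHyp_eq u c hu x
  rw [h]
  exact (measurePreserving_add_right volume ((2 * c) • u)).comp
    (reflLin u hu).measurePreserving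

lemma hyperplane_null (hu : ‖u‖ = 1) :
    volume {x : EuclideanSpace ℝ (Fin N) | ⟪x, u⟫ = c} = 0 := by
  set K := LinearMap.ker (innerSL ℝ u).toLinearMap with hK
  have hKne : K ≠ ⊤ := by
    intro h
    have hu' : u ∈ K := h ▸ Submodule.mem_top
    have : ⟪u, u⟫ = (0:ℝ) := hu'
    rw [inner_self_one u hu] at this; norm_num at this
  have hK0 : volume (K : Set (EuclideanSpace ℝ (Fin N))) = 0 :=
    Measure.addHaar_submodule volume K hKne
  have hset : {x : EuclideanSpace ℝ (Fin N) | ⟪x, u⟫ = c}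
      = (fun x => x + (-(c • u))) ⁻¹' (K : Set (EuclideanSpace ℝ (Fin N))) := by
    ext x
    simp only [Set.mem_setOf_eq, Set.mem_preimage, SetLike.mem_coe, hK, LinearMap.mem_ker,
      ContinuousLinearMap.coe_coe, innerSL_apply_apply, inner_add_right, inner_neg_right,
      real_inner_smul_right, inner_self_one u hu]
    rw [real_inner_comm u x]
    constructor <;> intro h <;> linarith
  rw [hset, measure_preimage_add_right volume _ _, hK0]

end Aux

/-- If `Ω ⊊ ℝ^N` is a nonempty open set with `Ω = Ω_{(closure H)ᶜ}` and
`f : Ω → ℝ` is nonnegative and measurable, then the dual polarization `f^H = f_H ∘ σ_H` (via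
the zero extension) is a rearrangement of `f` on `Ω`. -/

theorem dualPolFun_is_rearrangement {N : ℕ}
    (u : EuclideanSpace ℝ (Fin N)) (hu : ‖u‖ = 1) (c : ℝ)
    (Ω : Set (EuclideanSpace ℝ (Fin N))) (hne : Ω.Nonempty) (hopen : IsOpen Ω)
    (hproper : Ω ≠ Set.univ) (hΩ : Ω = polSetC u c Ω)
    (f : EuclideanSpace ℝ (Fin N) → ℝ) (hmeas : Measurable (Ω.indicator f))
    (hf : ∀ x ∈ Ω, 0 ≤ f x) :
    ∀ t : ℝ,
      volume {x ∈ Ω | t < polFun u c (Ω.indicator f) (reflHyp u c x)} =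
        volume {x ∈ Ω | t < f x} := by
  intro t
  set g := Ω.indicator f with hgdef
  set σ := reflHyp u c with hσdef
  have hinv : ∀ x, σ (σ x) = x := reflHyp_invol u c hu
  have hmp : MeasurePreserving σ volume volume := reflHyp_measurePreserving u c hu
  have hinner : ∀ x, ⟪σ x, u⟫ = 2 * c - ⟪x, u⟫ := inner_reflHyp u c hu
  have hg0 : ∀ y, 0 ≤ g y := fun y => Set.indicator_nonneg hf y
  have hF : ∀ x, polFun u c g (σ x)
      = if c < ⟪x, u⟫ then max (g x) (g (σ x)) else min (g x) (g (σ x)) := by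
    intro x
    rw [polFun, hinner, ← hσdef, hinv]
    by_cases h : c < ⟪x, u⟫
    · rw [if_pos (by linarith), if_pos h, max_comm]
    · push_neg at h
      rw [if_neg (by push_neg; linarith), if_neg (by push_neg; exact h), min_comm]
  rcases lt_or_ge t 0 with ht | ht
  · have h1 : {x ∈ Ω | t < polFun u c g (σ x)} = Ω := by
      apply Set.eq_of_subset_of_subset (fun x hx => hx.1)
      intro x hx
      refine ⟨hx, ?_⟩
      rw [hF x]
      split_ifs
      · exact lt_of_lt_of_le ht (le_max_of_le_left (hg0 x))
      · exact lt_of_lt_of_le ht (le_min (hg0 x) (hg0 (σ x)))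
    have h2 : {x ∈ Ω | t < f x} = Ω :=
      Set.eq_of_subset_of_subset (fun x hx => hx.1)
        (fun x hx => ⟨hx, lt_of_lt_of_le ht (hf x hx)⟩)
    rw [h1, h2]
  · set A := {x : EuclideanSpace ℝ (Fin N) | t < g x} with hA
    have hAmem : ∀ x, x ∈ A ↔ t < g x := fun x => Iff.rfl
    have hAsub : A ⊆ Ω := by
      intro x hx
      by_contra hxo
      have h0 : g x = 0 := Set.indicator_of_notMem hxo f
      have h1 : t < g x := hx
      rw [h0] at h1; linarith
    have hAm : MeasurableSet A := measurableSet_lt measurable_const hmeas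
    set B := σ ⁻¹' A with hB
    have hBmem : ∀ x, x ∈ B ↔ t < g (σ x) := fun x => Iff.rfl
    have hBm : MeasurableSet B := hAm.preimage hmp.measurable
    have hcont : Continuous fun x : EuclideanSpace ℝ (Fin N) => ⟪x, u⟫ :=
      continuous_id.inner continuous_const
    set P := {x : EuclideanSpace ℝ (Fin N) | c < ⟪x, u⟫} with hP
    set Q := {x : EuclideanSpace ℝ (Fin N) | ⟪x, u⟫ < c} with hQ
    set Z := {x : EuclideanSpace ℝ (Fin N) | ⟪x, u⟫ = c} with hZdef
    have hPmem : ∀ x, x ∈ P ↔ c < ⟪x, u⟫ := fun x => Iff.rfl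
    have hQmem : ∀ x, x ∈ Q ↔ ⟪x, u⟫ < c := fun x => Iff.rfl
    have hZmem : ∀ x, x ∈ Z ↔ ⟪x, u⟫ = c := fun x => Iff.rfl
    have hPm : MeasurableSet P := measurableSet_lt measurable_const hcont.measurable
    have hQm : MeasurableSet Q := measurableSet_lt hcont.measurable measurable_const
    have hZ : volume Z = 0 := hyperplane_null u c hu
    have hflip : ∀ y ∈ Ω, ⟪y, u⟫ ≤ c → σ y ∈ Ω := by
      intro y hy hyc
      rw [hΩ] at hy
      simp only [polSetC, Set.mem_union, Set.mem_inter_iff, Set.mem_setOf_eq, ← hσdef] at hy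
      rcases hy with ⟨_, hyP⟩ | ⟨_, hyσ⟩
      · linarith
      · obtain ⟨z, hz, hzy⟩ := hyσ
        rw [← hzy, hinv]; exact hz
    have hBP : B ∩ P ⊆ Ω := by
      rintro x ⟨hxB, hxP⟩
      have hσA : σ x ∈ Ω := hAsub hxB
      have hxP' : c < ⟪x, u⟫ := hxP
      have hσc : ⟪σ x, u⟫ ≤ c := by rw [hinner]; linarith
      have h := hflip (σ x) hσA hσc
      rwa [hinv] at h
    have hSeq : {x ∈ Ω | t < polFun u c g (σ x)} \ Z
        = ((A ∩ P) ∪ ((B \ A) ∩ P)) ∪ ((A ∩ B) ∩ Q) := by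
      ext x
      simp only [Set.mem_diff, Set.mem_sep_iff, Set.mem_union, Set.mem_inter_iff]
      constructor
      · rintro ⟨⟨hxΩ, hxt⟩, hxZ⟩
        rw [hF x] at hxt
        have hxZ' : ⟪x, u⟫ ≠ c := fun h => hxZ ((hZmem x).mpr h)
        by_cases hp : c < ⟪x, u⟫
        · rw [if_pos hp] at hxt
          by_cases ha : x ∈ A
          · exact Or.inl (Or.inl ⟨ha, (hPmem x).mpr hp⟩)
          · rcases lt_max_iff.mp hxt with h | h
            · exact absurd ((hAmem x).mpr h) ha
            · exact Or.inl (Or.inr ⟨⟨(hBmem x).mpr h, ha⟩, (hPmem x).mpr hp⟩)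
        · rw [if_neg hp] at hxt
          have hq : ⟪x, u⟫ < c := lt_of_le_of_ne (not_lt.mp hp) hxZ'
          exact Or.inr ⟨⟨(hAmem x).mpr (lt_min_iff.mp hxt).1,
            (hBmem x).mpr (lt_min_iff.mp hxt).2⟩, (hQmem x).mpr hq⟩
      · rintro ((⟨ha, hp⟩ | ⟨⟨hb, hna⟩, hp⟩) | ⟨⟨ha, hb⟩, hq⟩)
        · have hp' : c < ⟪x, u⟫ := hp
          refine ⟨⟨hAsub ha, ?_⟩, fun h => by have := (hZmem x).mp h; linarith⟩
          rw [hF x, if_pos hp']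
          exact lt_max_of_lt_left ((hAmem x).mp ha)
        · have hp' : c < ⟪x, u⟫ := hp
          refine ⟨⟨hBP ⟨hb, hp⟩, ?_⟩, fun h => by have := (hZmem x).mp h; linarith⟩
          rw [hF x, if_pos hp']
          exact lt_max_of_lt_right ((hBmem x).mp hb)
        · have hq' : ⟪x, u⟫ < c := hq
          refine ⟨⟨hAsub ha, ?_⟩, fun h => by have := (hZmem x).mp h; linarith⟩
          rw [hF x, if_neg (by push_neg; linarith)]
          exact lt_min ((hAmem x).mp ha) ((hBmem x).mp hb)
    have hAeq : {x ∈ Ω | t < f x} \ Z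
        = ((A ∩ P) ∪ ((A \ B) ∩ Q)) ∪ ((A ∩ B) ∩ Q) := by
      ext x
      simp only [Set.mem_diff, Set.mem_sep_iff, Set.mem_union, Set.mem_inter_iff]
      constructor
      · rintro ⟨⟨hxΩ, hxt⟩, hxZ⟩
        have hxA : x ∈ A := (hAmem x).mpr
          (by rw [hgdef, Set.indicator_of_mem hxΩ]; exact hxt)
        have hxZ' : ⟪x, u⟫ ≠ c := fun h => hxZ ((hZmem x).mpr h)
        by_cases hp : c < ⟪x, u⟫
        · exact Or.inl (Or.inl ⟨hxA, (hPmem x).mpr hp⟩)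
        · have hq : ⟪x, u⟫ < c := lt_of_le_of_ne (not_lt.mp hp) hxZ'
          by_cases hb : x ∈ B
          · exact Or.inr ⟨⟨hxA, hb⟩, (hQmem x).mpr hq⟩
          · exact Or.inl (Or.inr ⟨⟨hxA, hb⟩, (hQmem x).mpr hq⟩)
      · have key : ∀ y, y ∈ A → y ∈ Ω ∧ t < f y := by
          intro y hy
          have hyΩ := hAsub hy
          have h1 : t < g y := (hAmem y).mp hy
          rw [hgdef, Set.indicator_of_mem hyΩ] at h1
          exact ⟨hyΩ, h1⟩
        rintro ((⟨ha, hp⟩ | ⟨⟨ha, _⟩, hq⟩) | ⟨⟨ha, _⟩, hq⟩)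
        · have hp' : c < ⟪x, u⟫ := hp
          exact ⟨key x ha, fun h => by have := (hZmem x).mp h; linarith⟩
        · have hq' : ⟪x, u⟫ < c := hq
          exact ⟨key x ha, fun h => by have := (hZmem x).mp h; linarith⟩
        · have hq' : ⟪x, u⟫ < c := hq
          exact ⟨key x ha, fun h => by have := (hZmem x).mp h; linarith⟩
    have hPQ : ∀ s1 s2 : Set (EuclideanSpace ℝ (Fin N)),
        s1 ⊆ P → s2 ⊆ Q → Disjoint s1 s2 := by
      intro s1 s2 h1 h2
      rw [Set.disjoint_left]
      intro x hx1 hx2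
      have hxp : c < ⟪x, u⟫ := h1 hx1
      have hxq : ⟪x, u⟫ < c := h2 hx2
      linarith
    have hvol2 : volume ((B \ A) ∩ P) = volume ((A \ B) ∩ Q) := by
      have hpre : σ ⁻¹' ((A \ B) ∩ Q) = (B \ A) ∩ P := by
        ext x
        simp only [Set.mem_preimage, Set.mem_inter_iff, Set.mem_diff]
        constructor
        · rintro ⟨⟨h1, h2⟩, h3⟩
          have h2' : ¬ t < g (σ (σ x)) := fun h => h2 ((hBmem (σ x)).mpr h)
          rw [hinv] at h2'
          have h3' : ⟪σ x, u⟫ < c := h3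
          rw [hinner] at h3'
          exact ⟨⟨h1, fun h => h2' ((hAmem x).mp h)⟩, (hPmem x).mpr (by linarith)⟩
        · rintro ⟨⟨h1, h2⟩, h3⟩
          have h2' : ¬ t < g x := fun h => h2 ((hAmem x).mpr h)
          have h3' : c < ⟪x, u⟫ := h3
          refine ⟨⟨h1, fun h => ?_⟩, ?_⟩
          · have := (hBmem (σ x)).mp h
            rw [hinv] at this
            exact h2' this
          · show ⟪σ x, u⟫ < c
            rw [hinner]; linarith
      rw [← hpre, hmp.measure_preimage ((hAm.diff hBm).inter hQm).nullMeasurableSet]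
    have hd1 : Disjoint (A ∩ P) ((B \ A) ∩ P) := by
      rw [Set.disjoint_left]; rintro x ⟨hxA, _⟩ ⟨⟨_, hna⟩, _⟩; exact hna hxA
    have hd2 : Disjoint ((A ∩ P) ∪ ((B \ A) ∩ P)) ((A ∩ B) ∩ Q) :=
      hPQ _ _ (Set.union_subset Set.inter_subset_right Set.inter_subset_right)
        Set.inter_subset_right
    have hd3 : Disjoint (A ∩ P) ((A \ B) ∩ Q) :=
      hPQ _ _ Set.inter_subset_right Set.inter_subset_right
    have hd4 : Disjoint ((A ∩ P) ∪ ((A \ B) ∩ Q)) ((A ∩ B) ∩ Q) := by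
      rw [Set.disjoint_union_left]
      constructor
      · exact hPQ _ _ Set.inter_subset_right Set.inter_subset_right
      · rw [Set.disjoint_left]; rintro x ⟨⟨_, hnb⟩, _⟩ ⟨⟨_, hb⟩, _⟩; exact hnb hb
    calc volume {x ∈ Ω | t < polFun u c g (σ x)}
        = volume ({x ∈ Ω | t < polFun u c g (σ x)} \ Z) := (measure_diff_null hZ).symm
      _ = volume (((A ∩ P) ∪ ((B \ A) ∩ P)) ∪ ((A ∩ B) ∩ Q)) := by rw [hSeq]
      _ = volume (A ∩ P) + volume ((B \ A) ∩ P) + volume ((A ∩ B) ∩ Q) := by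
          rw [measure_union hd2 ((hAm.inter hBm).inter hQm),
            measure_union hd1 ((hBm.diff hAm).inter hPm)]
      _ = volume (A ∩ P) + volume ((A \ B) ∩ Q) + volume ((A ∩ B) ∩ Q) := by rw [hvol2]
      _ = volume (((A ∩ P) ∪ ((A \ B) ∩ Q)) ∪ ((A ∩ B) ∩ Q)) := by
          rw [measure_union hd4 ((hAm.inter hBm).inter hQm),
            measure_union hd3 ((hAm.diff hBm).inter hQm)]
      _ = volume ({x ∈ Ω | t < f x} \ Z) := by rw [hAeq]
      _ = volume {x ∈ Ω | t < f x} := measure_diff_null hZ
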